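/- Difference form of the causally conditioned directed information under a causal Markov constraint: Let (x_t, y_t, w_t), t = 1, ..., T, be random variables taking values in finite sets such that for every t the pair (y^t, x^{t-1}) is conditionally independent of w_t given (x^t, w^{t-1}). Then Σ_{t=1}^T I[x^t; w_t | (w^{t-1}, y^t)] = Σ_{t=1}^T I[x^t; w_t | w^{t-1}] − Σ_{t=1}^T I[y^t; w_t | w^{t-1}], i.e., I(x^T → w^T ‖ y^T) = I(x^T → w^T) − I(y^T → w^T). -/

import Mathlib

open MeasureTheory ProbabilityTheory Finset

/-- Shannon entropy (base 2) of a random variable with values in a finite type. -/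
noncomputable def shEnt {Ω : Type*} [MeasurableSpace Ω] {S : Type*} [Fintype S]
    (μ : Measure Ω) (X : Ω → S) : ℝ :=
  -∑ s : S, ((μ (X ⁻¹' {s})).toReal * Real.logb 2 (μ (X ⁻¹' {s})).toReal)

/-- Mutual information (base 2). -/
noncomputable def mutInf {Ω : Type*} [MeasurableSpace Ω] {S T : Type*} [Fintype S] [Fintype T]
    (μ : Measure Ω) (X : Ω → S) (Y : Ω → T) : ℝ :=
  shEnt μ X + shEnt μ Y - shEnt μ (fun ω => (X ω, Y ω))

/-- Conditional mutual information (base 2), `I[X ; Y | Z]`. -/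
noncomputable def condMutInf {Ω : Type*} [MeasurableSpace Ω] {S T U : Type*}
    [Fintype S] [Fintype T] [Fintype U]
    (μ : Measure Ω) (X : Ω → S) (Y : Ω → T) (Z : Ω → U) : ℝ :=
  shEnt μ (fun ω => (X ω, Z ω)) + shEnt μ (fun ω => (Y ω, Z ω))
    - shEnt μ (fun ω => (X ω, Y ω, Z ω)) - shEnt μ Z

/-- The history `a^t = (a_1, …, a_t)` of a process (0-indexed: the first `t` variables). -/
def hist {Ω : Type*} {α : ℕ → Type*} (x : (i : ℕ) → Ω → α i) (t : ℕ) :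
    Ω → ((i : Fin t) → α i) :=
  fun ω i => x i ω

theorem hist_measurable {Ω : Type*} [MeasurableSpace Ω] {α : ℕ → Type*}
    [∀ i, MeasurableSpace (α i)]
    (x : (i : ℕ) → Ω → α i) (hx : ∀ i, Measurable (x i)) (t : ℕ) :
    Measurable (hist x t) :=
  measurable_pi_lambda _ fun j => hx j

/-! By the chain rule, both `I[x^t; w_t | w^{t-1}, y^t] + I[y^t; w_t | w^{t-1}]` and
`I[x^t; w_t | w^{t-1}] + I[y^t; w_t | x^t, w^{t-1}]` equal `I[(x^t, y^t); w_t | w^{t-1}]`.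
The Markov condition (weakened by forgetting `x^{t-1}`) makes `y^t` and `w_t` conditionally
independent given `(x^t, w^{t-1})`, so the last term vanishes: conditional independence given a
finite-valued variable factorizes the joint law on each of its atoms, and the entropy terms of
the conditional mutual information then cancel pointwise. -/

section Entropy

variable {Ω : Type*} [MeasurableSpace Ω] (μ : Measure Ω)

lemma shEnt_comp_of_injective {S T : Type*} [Fintype S] [Fintype T] {g : S → T}
    (hg : Function.Injective g) (X : Ω → S) :
    shEnt μ (fun ω => g (X ω)) = shEnt μ X := by
  unfold shEnt
  congr 1
  refine (Fintype.sum_of_injective g hg _ _ (fun t ht => ?_) (fun s => ?_)).symm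
  · have : (fun ω => g (X ω)) ⁻¹' {t} = ∅ :=
      Set.eq_empty_of_forall_notMem fun ω hω => ht ⟨X ω, hω⟩
    simp [this]
  · have : (fun ω => g (X ω)) ⁻¹' {g s} = X ⁻¹' {s} := by
      ext ω
      simp [hg.eq_iff]
    rw [this]

lemma shEnt_comp_eq_sum [IsFiniteMeasure μ] {S T : Type*} [Fintype S] [Fintype T]
    [MeasurableSpace S] [MeasurableSingletonClass S]
    {X : Ω → S} (hX : Measurable X) (g : S → T) :
    shEnt μ (fun ω => g (X ω))
      = -∑ s, μ.real (X ⁻¹' {s}) * Real.logb 2 (μ.real ((fun ω => g (X ω)) ⁻¹' {g s})) := by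
  classical
  set L : T → ℝ := fun t => Real.logb 2 (μ.real ((fun ω => g (X ω)) ⁻¹' {t}))
  have hfiber (t : T) :
      μ.real ((fun ω => g (X ω)) ⁻¹' {t}) = ∑ s with g s = t, μ.real (X ⁻¹' {s}) := by
    rw [sum_measureReal_preimage_singleton _ fun s _ => hX (measurableSet_singleton s)]
    congr 1
    ext ω
    simp
  change -∑ t, μ.real ((fun ω => g (X ω)) ⁻¹' {t}) * L t = -∑ s, μ.real (X ⁻¹' {s}) * L (g s)
  rw [← Finset.sum_fiberwise _ g fun s => μ.real (X ⁻¹' {s}) * L (g s)]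
  congr 1
  refine Finset.sum_congr rfl fun t _ => ?_
  rw [hfiber, Finset.sum_mul]
  refine Finset.sum_congr rfl fun s hs => ?_
  rw [(Finset.mem_filter.mp hs).2]

lemma condMutInf_prod_add_condMutInf {S T U V : Type*} [Fintype S] [Fintype T] [Fintype U]
    [Fintype V] (X : Ω → S) (Y : Ω → T) (W : Ω → U) (C : Ω → V) :
    condMutInf μ X W (fun ω => (C ω, Y ω)) + condMutInf μ Y W C
      = condMutInf μ X W C + condMutInf μ Y W (fun ω => (X ω, C ω)) := by
  have hCY : shEnt μ (fun ω => (C ω, Y ω)) = shEnt μ (fun ω => (Y ω, C ω)) :=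
    shEnt_comp_of_injective μ (g := fun p : T × V => (p.2, p.1))
      (fun p q h => by simp_all [Prod.ext_iff]) (fun ω => (Y ω, C ω))
  have hWCY : shEnt μ (fun ω => (W ω, C ω, Y ω)) = shEnt μ (fun ω => (Y ω, W ω, C ω)) :=
    shEnt_comp_of_injective μ (g := fun p : T × U × V => (p.2.1, p.2.2, p.1))
      (fun p q h => by simp_all [Prod.ext_iff]) (fun ω => (Y ω, W ω, C ω))
  have hXCY : shEnt μ (fun ω => (X ω, C ω, Y ω)) = shEnt μ (fun ω => (Y ω, X ω, C ω)) :=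
    shEnt_comp_of_injective μ (g := fun p : T × S × V => (p.2.1, p.2.2, p.1))
      (fun p q h => by simp_all [Prod.ext_iff]) (fun ω => (Y ω, X ω, C ω))
  have hXWCY :
      shEnt μ (fun ω => (X ω, W ω, C ω, Y ω)) = shEnt μ (fun ω => (Y ω, W ω, X ω, C ω)) :=
    shEnt_comp_of_injective μ (g := fun p : T × U × S × V => (p.2.2.1, p.2.1, p.2.2.2, p.1))
      (fun p q h => by simp_all [Prod.ext_iff]) (fun ω => (Y ω, W ω, X ω, C ω))
  have hWXC : shEnt μ (fun ω => (W ω, X ω, C ω)) = shEnt μ (fun ω => (X ω, W ω, C ω)) :=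
    shEnt_comp_of_injective μ (g := fun p : S × U × V => (p.2.1, p.1, p.2.2))
      (fun p q h => by simp_all [Prod.ext_iff]) (fun ω => (X ω, W ω, C ω))
  simp only [condMutInf]
  linarith

end Entropy

lemma mul_logb_add_mul_logb_eq_of_mul_eq {p a b c : ℝ} (h : p * c = a * b) (hp : 0 ≤ p)
    (hpa : p ≤ a) (hpb : p ≤ b) :
    p * Real.logb 2 a + p * Real.logb 2 b = p * Real.logb 2 p + p * Real.logb 2 c := by
  rcases hp.eq_or_lt with rfl | hp
  · simp
  have ha : a ≠ 0 := (hp.trans_le hpa).ne'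
  have hb : b ≠ 0 := (hp.trans_le hpb).ne'
  have hc : c ≠ 0 := by
    rintro rfl
    exact mul_ne_zero ha hb (by simpa using h.symm)
  have hlog := congrArg (Real.logb 2) h
  rw [Real.logb_mul hp.ne' hc, Real.logb_mul ha hb] at hlog
  rw [← mul_add, ← mul_add, hlog]

section CondIndep

variable {Ω : Type*} [MeasurableSpace Ω] {μ : Measure Ω} {Γ : Type*} [MeasurableSpace Γ]
  [MeasurableSingletonClass Γ] {Z : Ω → Γ}

lemma setIntegral_preimage_singleton_of_comap {f : Ω → ℝ}
    (hf : StronglyMeasurable[MeasurableSpace.comap Z inferInstance] f) (hZ : Measurable Z)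
    (ω₀ : Ω) :
    ∫ ω in Z ⁻¹' {Z ω₀}, f ω ∂μ = f ω₀ * μ.real (Z ⁻¹' {Z ω₀}) := by
  rw [setIntegral_congr_fun (hZ (measurableSet_singleton _)) fun ω hω => hf.factorsThrough hω,
    setIntegral_const, smul_eq_mul, mul_comm]

lemma measureReal_inter_preimage_singleton_eq_condExp_mul [IsFiniteMeasure μ]
    (hZ : Measurable Z) {s : Set Ω} (hs : MeasurableSet s) (ω₀ : Ω) :
    μ.real (s ∩ Z ⁻¹' {Z ω₀})
      = (μ⟦s | MeasurableSpace.comap Z inferInstance⟧) ω₀ * μ.real (Z ⁻¹' {Z ω₀}) := by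
  rw [← setIntegral_preimage_singleton_of_comap stronglyMeasurable_condExp hZ,
    setIntegral_condExp hZ.comap_le ((integrable_const (1 : ℝ)).indicator hs)
      ⟨_, measurableSet_singleton _, rfl⟩,
    setIntegral_indicator hs, setIntegral_const, smul_eq_mul, mul_one, Set.inter_comm]

/- Integrate the a.e. identity `μ⟦B ∩ D | σ(Z)⟧ = μ⟦B | σ(Z)⟧ * μ⟦D | σ(Z)⟧` over the atom
`{Z = z}`, on which both conditional expectations are constant. -/
lemma measureReal_inter_mul_eq_of_condIndepFun [StandardBorelSpace Ω] [IsFiniteMeasure μ]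
    {S T : Type*} [MeasurableSpace S] [MeasurableSpace T] {X : Ω → S} {Y : Ω → T}
    (hX : Measurable X) (hY : Measurable Y) (hZ : Measurable Z)
    (hXY : CondIndepFun (MeasurableSpace.comap Z inferInstance) hZ.comap_le X Y μ)
    {s : Set S} {t : Set T} (hs : MeasurableSet s) (ht : MeasurableSet t) (z : Γ) :
    μ.real (X ⁻¹' s ∩ Y ⁻¹' t ∩ Z ⁻¹' {z}) * μ.real (Z ⁻¹' {z})
      = μ.real (X ⁻¹' s ∩ Z ⁻¹' {z}) * μ.real (Y ⁻¹' t ∩ Z ⁻¹' {z}) := by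
  rcases (Z ⁻¹' {z}).eq_empty_or_nonempty with hempty | ⟨ω₀, rfl⟩
  · simp [hempty]
  have hprod := (condIndepFun_iff_condExp_inter_preimage_eq_mul hX hY).mp hXY s t hs ht
  have hXYZ : μ.real (X ⁻¹' s ∩ Y ⁻¹' t ∩ Z ⁻¹' {Z ω₀})
      = (μ⟦X ⁻¹' s | MeasurableSpace.comap Z inferInstance⟧) ω₀
        * (μ⟦Y ⁻¹' t | MeasurableSpace.comap Z inferInstance⟧) ω₀ * μ.real (Z ⁻¹' {Z ω₀}) := by
    rw [measureReal_inter_preimage_singleton_eq_condExp_mul hZ ((hX hs).inter (hY ht)),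
      ← setIntegral_preimage_singleton_of_comap stronglyMeasurable_condExp hZ]
    exact (setIntegral_congr_ae (hZ (measurableSet_singleton _)) (hprod.mono fun ω h _ => h)).trans
      (setIntegral_preimage_singleton_of_comap
        (stronglyMeasurable_condExp.mul stronglyMeasurable_condExp) hZ ω₀)
  rw [hXYZ, measureReal_inter_preimage_singleton_eq_condExp_mul hZ (hX hs),
    measureReal_inter_preimage_singleton_eq_condExp_mul hZ (hY ht)]
  ring

end CondIndep

lemma condMutInf_eq_zero_of_condIndepFun {Ω : Type*} [MeasurableSpace Ω] [StandardBorelSpace Ω]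
    {μ : Measure Ω} [IsFiniteMeasure μ] {S T U : Type*} [Fintype S] [Fintype T] [Fintype U]
    [MeasurableSpace S] [MeasurableSpace T] [MeasurableSpace U] [MeasurableSingletonClass S]
    [MeasurableSingletonClass T] [MeasurableSingletonClass U] {X : Ω → S} {Y : Ω → T}
    {Z : Ω → U} (hX : Measurable X) (hY : Measurable Y) (hZ : Measurable Z)
    (hXY : CondIndepFun (MeasurableSpace.comap Z inferInstance) hZ.comap_le X Y μ) :
    condMutInf μ X Y Z = 0 := by
  classical
  set V := fun ω => (X ω, Y ω, Z ω)
  have hV : Measurable V := hX.prodMk (hY.prodMk hZ)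
  have hXZ : shEnt μ (fun ω => (X ω, Z ω)) = -∑ s, μ.real (V ⁻¹' {s}) *
      Real.logb 2 (μ.real ((fun ω => (X ω, Z ω)) ⁻¹' {(s.1, s.2.2)})) :=
    shEnt_comp_eq_sum μ hV fun s => (s.1, s.2.2)
  have hYZ : shEnt μ (fun ω => (Y ω, Z ω)) = -∑ s, μ.real (V ⁻¹' {s}) *
      Real.logb 2 (μ.real ((fun ω => (Y ω, Z ω)) ⁻¹' {s.2})) :=
    shEnt_comp_eq_sum μ hV fun s => s.2
  have hZent : shEnt μ Z = -∑ s, μ.real (V ⁻¹' {s}) * Real.logb 2 (μ.real (Z ⁻¹' {s.2.2})) :=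
    shEnt_comp_eq_sum μ hV fun s => s.2.2
  have hXYZ : shEnt μ (fun ω => (X ω, Y ω, Z ω))
      = -∑ s, μ.real (V ⁻¹' {s}) * Real.logb 2 (μ.real (V ⁻¹' {s})) := rfl
  have hpointwise (s : S × T × U) :
      μ.real (V ⁻¹' {s}) * Real.logb 2 (μ.real ((fun ω => (X ω, Z ω)) ⁻¹' {(s.1, s.2.2)}))
        + μ.real (V ⁻¹' {s}) * Real.logb 2 (μ.real ((fun ω => (Y ω, Z ω)) ⁻¹' {s.2}))
      = μ.real (V ⁻¹' {s}) * Real.logb 2 (μ.real (V ⁻¹' {s}))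
        + μ.real (V ⁻¹' {s}) * Real.logb 2 (μ.real (Z ⁻¹' {s.2.2})) := by
    obtain ⟨x, y, z⟩ := s
    refine mul_logb_add_mul_logb_eq_of_mul_eq ?_ measureReal_nonneg
      (measureReal_mono fun ω (hω : V ω = _) => congrArg (fun s : S × T × U => (s.1, s.2.2)) hω)
      (measureReal_mono fun ω (hω : V ω = _) => congrArg Prod.snd hω)
    have := measureReal_inter_mul_eq_of_condIndepFun hX hY hZ hXY
      (measurableSet_singleton x) (measurableSet_singleton y) z
    simpa only [V, ← Set.singleton_prod_singleton, Set.mk_preimage_prod, Set.inter_assoc]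
      using this
  rw [condMutInf, hXZ, hYZ, hXYZ, hZent, ← neg_add, ← Finset.sum_add_distrib,
    Finset.sum_congr rfl fun s _ => hpointwise s, Finset.sum_add_distrib]
  ring

/-- Difference form of the causally conditioned directed information: if for every `t` the pair
`(y^t, x^{t-1})` is conditionally independent of `w_t` given `(x^t, w^{t-1})`, then
`I(x^T → w^T ‖ y^T) = I(x^T → w^T) − I(y^T → w^T)`. -/
theorem causallyConditioned_directedInfo_difference_form
    {Ω : Type*} [MeasurableSpace Ω] [StandardBorelSpace Ω]
    (μ : Measure Ω) [IsProbabilityMeasure μ]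
    (T : ℕ) {α β γ : ℕ → Type*}
    [∀ t, Fintype (α t)] [∀ t, Fintype (β t)] [∀ t, Fintype (γ t)]
    [∀ t, MeasurableSpace (α t)] [∀ t, MeasurableSpace (β t)] [∀ t, MeasurableSpace (γ t)]
    [∀ t, MeasurableSingletonClass (α t)] [∀ t, MeasurableSingletonClass (β t)]
    [∀ t, MeasurableSingletonClass (γ t)]
    (x : (t : ℕ) → Ω → α t) (y : (t : ℕ) → Ω → β t) (w : (t : ℕ) → Ω → γ t)
    (hx : ∀ t, Measurable (x t)) (hy : ∀ t, Measurable (y t)) (hw : ∀ t, Measurable (w t))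
    (hMarkov : ∀ t < T,
      CondIndepFun
        (MeasurableSpace.comap (fun ω => (hist x (t + 1) ω, hist w t ω)) inferInstance)
        (((hist_measurable x hx (t + 1)).prodMk (hist_measurable w hw t)).comap_le)
        (fun ω => (hist y (t + 1) ω, hist x t ω)) (w t) μ) :
    ∑ t ∈ range T,
        condMutInf μ (hist x (t + 1)) (w t) (fun ω => (hist w t ω, hist y (t + 1) ω))
      = ∑ t ∈ range T, condMutInf μ (hist x (t + 1)) (w t) (hist w t)
        - ∑ t ∈ range T, condMutInf μ (hist y (t + 1)) (w t) (hist w t) := by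
  rw [← Finset.sum_sub_distrib]
  refine Finset.sum_congr rfl fun t ht => ?_
  have hyw : CondIndepFun _ _ (hist y (t + 1)) (w t) μ :=
    (hMarkov t (mem_range.mp ht)).comp measurable_fst measurable_id
  have hzero := condMutInf_eq_zero_of_condIndepFun (hist_measurable y hy (t + 1)) (hw t)
    ((hist_measurable x hx (t + 1)).prodMk (hist_measurable w hw t)) hyw
  linarith [condMutInf_prod_add_condMutInf μ (hist x (t + 1)) (hist y (t + 1)) (w t) (hist w t)]
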